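/- Let α > 2 and set t₋ = √((α − √(α² − 4))/2) and t₊ = √((α + √(α² − 4))/2). Then α·t² − t⁴ − 1 > 0 for all t ∈ (t₋, t₊), and there exists a unique β ∈ ℝ such that ∫_{t₋}^{t₊} (β − t²)/√(α·t² − t⁴ − 1) dt = 0. This unique β satisfies (α − 2β)² < α² − 4. -/
import Mathlib


open intervalIntegral

open MeasureTheory Set in

lemma aux_sqrt_int (a b : ℝ) (ha : 0 < a) (hab : a < b) :
    IntervalIntegrable (fun t => (Real.sqrt ((t ^ 2 - a ^ 2) * (b ^ 2 - t ^ 2)))⁻¹)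
      MeasureTheory.volume a b := by
  set m : ℝ := (a + b) / 2 with hm
  have ham : a < m := by rw [hm]; linarith
  have hmb : m < b := by rw [hm]; linarith
  have hK : 0 < a * b * (b - a) :=
    mul_pos (mul_pos ha (ha.trans hab)) (by linarith)
  have hmeas : Measurable fun t : ℝ => (Real.sqrt ((t ^ 2 - a ^ 2) * (b ^ 2 - t ^ 2)))⁻¹ :=
    (Real.continuous_sqrt.measurable.comp (by measurability)).inv
  have hrpow : ∀ x : ℝ, 0 ≤ x → x ^ (-(1 / 2) : ℝ) = (Real.sqrt x)⁻¹ := by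
    intro x hx
    rw [Real.rpow_neg hx, Real.sqrt_eq_rpow]
  have hbound : ∀ t : ℝ, a < t → t < b → ∀ u : ℝ, 0 < u →
      a * b * (b - a) * u ≤ (t ^ 2 - a ^ 2) * (b ^ 2 - t ^ 2) →
      ‖(Real.sqrt ((t ^ 2 - a ^ 2) * (b ^ 2 - t ^ 2)))⁻¹‖
        ≤ (Real.sqrt (a * b * (b - a)))⁻¹ * (u ^ (-(1 / 2) : ℝ)) := by
    intro t hat htb u hu h2
    have h3 : Real.sqrt (a * b * (b - a) * u)
        ≤ Real.sqrt ((t ^ 2 - a ^ 2) * (b ^ 2 - t ^ 2)) := Real.sqrt_le_sqrt h2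
    have h4 : 0 < Real.sqrt (a * b * (b - a) * u) :=
      Real.sqrt_pos.mpr (by positivity)
    rw [Real.norm_eq_abs, abs_of_nonneg (by positivity)]
    calc (Real.sqrt ((t ^ 2 - a ^ 2) * (b ^ 2 - t ^ 2)))⁻¹
        ≤ (Real.sqrt (a * b * (b - a) * u))⁻¹ := inv_anti₀ h4 h3
      _ = (Real.sqrt (a * b * (b - a)))⁻¹ * (u ^ (-(1 / 2) : ℝ)) := by
          rw [Real.sqrt_mul hK.le, mul_inv, hrpow _ hu.le]
  -- left piece
  have hleft : IntervalIntegrable (fun t => (Real.sqrt ((t ^ 2 - a ^ 2) * (b ^ 2 - t ^ 2)))⁻¹)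
      MeasureTheory.volume a m := by
    have hg0 : IntervalIntegrable (fun x : ℝ => x ^ (-(1 / 2) : ℝ)) MeasureTheory.volume 0 (m - a) :=
      intervalIntegrable_rpow' (by norm_num)
    have hg1 := (hg0.comp_sub_right a).const_mul (Real.sqrt (a * b * (b - a)))⁻¹
    simp only [zero_add, sub_add_cancel] at hg1
    apply IntervalIntegrable.mono_fun' hg1 hmeas.aestronglyMeasurable
    rw [uIoc_of_le ham.le]
    refine (ae_restrict_iff' measurableSet_Ioc).mpr (Filter.Eventually.of_forall ?_)
    intro t ht
    have h1 : 0 < t - a := by linarith [ht.1]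
    have htb : t < b := lt_of_le_of_lt ht.2 hmb
    refine hbound t ht.1 htb (t - a) h1 ?_
    have e1 : 2 * a ≤ t + a := by linarith [ht.1]
    have e2 : (b - a) / 2 ≤ b - t := by
      have := ht.2; rw [hm] at this; linarith
    have e3 : b ≤ b + t := by linarith
    have p1 : 2 * a * ((b - a) / 2) ≤ (t + a) * (b - t) :=
      mul_le_mul e1 e2 (by linarith) (by linarith)
    have p2 : 2 * a * ((b - a) / 2) * b ≤ (t + a) * (b - t) * (b + t) :=
      mul_le_mul p1 e3 (by linarith) (mul_nonneg (by linarith) (by linarith))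
    nlinarith [mul_le_mul_of_nonneg_left p2 h1.le]
  -- right piece
  have hright : IntervalIntegrable (fun t => (Real.sqrt ((t ^ 2 - a ^ 2) * (b ^ 2 - t ^ 2)))⁻¹)
      MeasureTheory.volume m b := by
    have hg0 : IntervalIntegrable (fun x : ℝ => x ^ (-(1 / 2) : ℝ)) MeasureTheory.volume 0 (b - m) :=
      intervalIntegrable_rpow' (by norm_num)
    have hg1 := ((hg0.comp_sub_left b).const_mul (Real.sqrt (a * b * (b - a)))⁻¹).symm
    simp only [sub_zero, sub_sub_cancel] at hg1
    apply IntervalIntegrable.mono_fun' hg1 hmeas.aestronglyMeasurable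
    rw [uIoc_of_le hmb.le]
    refine (ae_restrict_iff' measurableSet_Ioc).mpr (Filter.Eventually.of_forall ?_)
    intro t ht
    rcases eq_or_lt_of_le ht.2 with hteq | htlt
    · subst hteq
      simp [Real.sqrt_eq_zero', Real.zero_rpow]
    · have h1 : 0 < b - t := by linarith
      refine hbound t (ham.trans ht.1) htlt (b - t) h1 ?_
      have e1 : 2 * a ≤ t + a := by linarith [ham.trans ht.1]
      have e2 : (b - a) / 2 ≤ t - a := by
        have := ht.1; rw [hm] at this; linarith
      have e3 : b ≤ b + t := by linarith [ha.trans (ham.trans ht.1)]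
      have p1 : 2 * a * ((b - a) / 2) ≤ (t + a) * (t - a) :=
        mul_le_mul e1 e2 (by linarith) (by linarith [ham.trans ht.1, ha])
      have p2 : 2 * a * ((b - a) / 2) * b ≤ (t + a) * (t - a) * (b + t) := by
        refine mul_le_mul p1 e3 (by linarith) ?_
        have h5 : 0 < t + a := by linarith [ham.trans ht.1]
        have h6 : 0 < t - a := by linarith [ham.trans ht.1]
        positivity
      nlinarith [mul_le_mul_of_nonneg_left p2 h1.le]
  exact hleft.trans hright


set_option maxHeartbeats 1000000 in
theorem stmt_3 (α : ℝ) (hα : 2 < α) (tm tp : ℝ)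
    (htm : tm = Real.sqrt ((α - Real.sqrt (α ^ 2 - 4)) / 2))
    (htp : tp = Real.sqrt ((α + Real.sqrt (α ^ 2 - 4)) / 2)) :
    (∀ t ∈ Set.Ioo tm tp, 0 < α * t ^ 2 - t ^ 4 - 1) ∧
    (∃! β : ℝ,
      (∫ t in tm..tp, (β - t ^ 2) / Real.sqrt (α * t ^ 2 - t ^ 4 - 1)) = 0) ∧
    (∀ β : ℝ,
      (∫ t in tm..tp, (β - t ^ 2) / Real.sqrt (α * t ^ 2 - t ^ 4 - 1)) = 0 →
      (α - 2 * β) ^ 2 < α ^ 2 - 4) := by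
  set s : ℝ := Real.sqrt (α ^ 2 - 4) with hsdef
  have hs2 : s ^ 2 = α ^ 2 - 4 := Real.sq_sqrt (by nlinarith)
  have hspos : 0 < s := Real.sqrt_pos.mpr (by nlinarith)
  have hsα : s < α := by nlinarith
  have htm2 : tm ^ 2 = (α - s) / 2 := by
    rw [htm]; exact Real.sq_sqrt (by linarith)
  have htp2 : tp ^ 2 = (α + s) / 2 := by
    rw [htp]; exact Real.sq_sqrt (by linarith)
  have htmpos : 0 < tm := by
    rw [htm]; exact Real.sqrt_pos.mpr (by linarith)
  have htmtp : tm < tp := by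
    rw [htm, htp]; exact Real.sqrt_lt_sqrt (by linarith) (by linarith)
  have hsum : tm ^ 2 + tp ^ 2 = α := by rw [htm2, htp2]; ring
  have hprod : tm ^ 2 * tp ^ 2 = 1 := by
    rw [htm2, htp2]; nlinarith [hs2]
  have key : ∀ t : ℝ, α * t ^ 2 - t ^ 4 - 1 = (t ^ 2 - tm ^ 2) * (tp ^ 2 - t ^ 2) := by
    intro t; nlinarith [hsum, hprod]
  have part1 : ∀ t ∈ Set.Ioo tm tp, 0 < α * t ^ 2 - t ^ 4 - 1 := by
    intro t ht
    rw [key]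
    have h1 : tm ^ 2 < t ^ 2 := by nlinarith [ht.1, ht.2, htmpos]
    have h2 : t ^ 2 < tp ^ 2 := by nlinarith [ht.1, ht.2, htmpos]
    exact mul_pos (by linarith) (by linarith)
  set w : ℝ → ℝ := fun t => (Real.sqrt (α * t ^ 2 - t ^ 4 - 1))⁻¹ with hwdef
  have hw_eq : w = fun t => (Real.sqrt ((t ^ 2 - tm ^ 2) * (tp ^ 2 - t ^ 2)))⁻¹ :=
    funext fun t => by
      show (Real.sqrt (α * t ^ 2 - t ^ 4 - 1))⁻¹ = _
      rw [key t]
  have hwmeas : Measurable w := by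
    rw [hw_eq]
    exact (Real.continuous_sqrt.measurable.comp
      (((continuous_pow 2).sub continuous_const).mul
        (continuous_const.sub (continuous_pow 2))).measurable).inv
  have hw_int : IntervalIntegrable w MeasureTheory.volume tm tp := by
    rw [hw_eq]; exact aux_sqrt_int tm tp htmpos htmtp
  have hw_nonneg : ∀ t, 0 ≤ w t := fun t => by positivity
  have hw2_int : IntervalIntegrable (fun t => t ^ 2 * w t) MeasureTheory.volume tm tp := by
    apply IntervalIntegrable.mono_fun' (hw_int.const_mul (tp ^ 2))
    · exact (((continuous_pow 2).measurable).mul hwmeas).aestronglyMeasurable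
    · rw [Set.uIoc_of_le htmtp.le]
      refine (MeasureTheory.ae_restrict_iff' measurableSet_Ioc).mpr
        (Filter.Eventually.of_forall ?_)
      intro t ht
      show ‖t ^ 2 * w t‖ ≤ tp ^ 2 * w t
      rw [Real.norm_eq_abs, abs_of_nonneg (mul_nonneg (sq_nonneg t) (hw_nonneg t))]
      have ht2 : t ^ 2 ≤ tp ^ 2 := by nlinarith [ht.1, ht.2, htmpos]
      exact mul_le_mul_of_nonneg_right ht2 (hw_nonneg t)
  set I0 : ℝ := ∫ t in tm..tp, w t with hI0def
  set I2 : ℝ := ∫ t in tm..tp, t ^ 2 * w t with hI2def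
  have hwpos : ∀ t ∈ Set.Ioo tm tp, 0 < w t := by
    intro t ht
    rw [hwdef]
    exact inv_pos.mpr (Real.sqrt_pos.mpr (part1 t ht))
  have hI0 : 0 < I0 :=
    intervalIntegral_pos_of_pos_on hw_int hwpos htmtp
  have hIform : ∀ β : ℝ,
      (∫ t in tm..tp, (β - t ^ 2) / Real.sqrt (α * t ^ 2 - t ^ 4 - 1)) = β * I0 - I2 := by
    intro β
    have heq : Set.EqOn (fun t => (β - t ^ 2) / Real.sqrt (α * t ^ 2 - t ^ 4 - 1))
        (fun t => β * w t - t ^ 2 * w t) (Set.uIcc tm tp) := by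
      intro t _
      simp only [hwdef, div_eq_mul_inv]
      ring
    rw [intervalIntegral.integral_congr heq,
      intervalIntegral.integral_sub (hw_int.const_mul β) hw2_int,
      intervalIntegral.integral_const_mul]
  have hlow : tm ^ 2 * I0 < I2 := by
    have hpos : 0 < ∫ t in tm..tp, (t ^ 2 * w t - tm ^ 2 * w t) := by
      refine intervalIntegral_pos_of_pos_on (hw2_int.sub (hw_int.const_mul (tm ^ 2)))
        ?_ htmtp
      intro t ht
      have h1 : tm ^ 2 < t ^ 2 := by nlinarith [ht.1, ht.2, htmpos]
      have := hwpos t ht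
      nlinarith
    rw [intervalIntegral.integral_sub hw2_int (hw_int.const_mul (tm ^ 2)),
      intervalIntegral.integral_const_mul] at hpos
    linarith
  have hhigh : I2 < tp ^ 2 * I0 := by
    have hpos : 0 < ∫ t in tm..tp, (tp ^ 2 * w t - t ^ 2 * w t) := by
      refine intervalIntegral_pos_of_pos_on ((hw_int.const_mul (tp ^ 2)).sub hw2_int)
        ?_ htmtp
      intro t ht
      have h1 : t ^ 2 < tp ^ 2 := by nlinarith [ht.1, ht.2, htmpos]
      have := hwpos t ht
      nlinarith
    rw [intervalIntegral.integral_sub (hw_int.const_mul (tp ^ 2)) hw2_int,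
      intervalIntegral.integral_const_mul] at hpos
    linarith
  refine ⟨part1, ⟨I2 / I0, ?_, ?_⟩, ?_⟩
  · show (∫ t in tm..tp, (I2 / I0 - t ^ 2) / Real.sqrt (α * t ^ 2 - t ^ 4 - 1)) = 0
    rw [hIform, div_mul_cancel₀ _ hI0.ne']; ring
  · intro β hβ
    have hβ2 : (∫ t in tm..tp, (β - t ^ 2) / Real.sqrt (α * t ^ 2 - t ^ 4 - 1)) = 0 := hβ
    rw [hIform] at hβ2
    field_simp
    linarith
  · intro β hβ
    rw [hIform] at hβ
    have hβ' : β * I0 = I2 := by linarith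
    have h1 : tm ^ 2 < β := by
      by_contra h
      push_neg at h
      nlinarith
    have h2 : β < tp ^ 2 := by
      by_contra h
      push_neg at h
      nlinarith
    rw [htm2] at h1
    rw [htp2] at h2
    have : (α - 2 * β) ^ 2 < s ^ 2 := sq_lt_sq' (by linarith) (by linarith)
    linarith [hs2]
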